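/- arXiv:2511.10815 — 2 statements merged into one kernel-verified Lean document; each statement's English description precedes it below -/
import Mathlib

section
/- Let y : [0,t] → ℝⁿ be M-Lipschitz and suppose dist(y(τ),𝔐) > δ for some τ with δ/(2M) ≤ τ ≤ t − δ/(2M), where f satisfies the gap condition (A3). Then the discounted occupation fraction satisfies (λ/(1−e^{-λt})) ∫₀ᵗ 1_{f(y(s)) > f̲ + γ(δ/2)} e^{-λs} ds ≥ λ e^{-λτ} δ/(M(1−e^{-λt})). -/
/-!
Within time `h = δ/(2M)` of `τ` the trajectory moves by at most `δ/2`, so it stays at distance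
`> δ/2` from `𝔐` and the gap condition puts `f ∘ y` above `f̲ + γ(δ/2)` on `[τ - h, τ + h]`.
The integrand is therefore `e^{-λs}` there and nonnegative elsewhere, and
`∫_{τ-h}^{τ+h} e^{-λs} ds = 2 e^{-λτ} sinh(λh) / λ ≥ 2h e^{-λτ} = δ e^{-λτ} / M`.
-/

open MeasureTheory Real

theorem integral_exp_neg_mul_sub_add (lam τ h : ℝ) (hlam : lam ≠ 0) :
    ∫ s in τ - h..τ + h, exp (-lam * s) = 2 * exp (-lam * τ) * sinh (lam * h) / lam := by
  rw [intervalIntegral.integral_comp_mul_left exp (neg_ne_zero.2 hlam), integral_exp,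
    smul_eq_mul, sinh_eq]
  have hb : -lam * (τ + h) = -lam * τ + -(lam * h) := by ring
  have ha : -lam * (τ - h) = -lam * τ + lam * h := by ring
  rw [hb, ha, exp_add, exp_add]
  field_simp
  ring

theorem two_mul_mul_exp_le_integral_exp_neg_mul {lam h : ℝ} (τ : ℝ) (hlam : 0 < lam)
    (hh : 0 ≤ h) :
    2 * h * exp (-lam * τ) ≤ ∫ s in τ - h..τ + h, exp (-lam * s) := by
  rw [integral_exp_neg_mul_sub_add lam τ h hlam.ne', le_div_iff₀ hlam]
  have := Real.self_le_sinh_iff.2 (mul_nonneg hlam.le hh)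
  nlinarith [exp_pos (-lam * τ)]

theorem intervalIntegrable_ite_lt {F g : ℝ → ℝ} {a b : ℝ} (c : ℝ)
    (hF : ContinuousOn F (Set.uIcc a b)) (hg : Continuous g) :
    IntervalIntegrable (fun s => if c < F s then g s else 0) volume a b := by
  have hset : NullMeasurableSet {s | c < F s} (volume.restrict (Set.uIcc a b)) :=
    nullMeasurableSet_lt aemeasurable_const (hF.aemeasurable measurableSet_uIcc)
  rw [intervalIntegrable_iff']
  refine (Integrable.indicator₀ hg.integrableOn_uIcc hset).congr (.of_forall fun s => ?_)
  simp only [Set.indicator_apply, Set.mem_ofPred_eq]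

theorem integral_le_integral_ite_lt {F g : ℝ → ℝ} {a b c u v : ℝ} (hua : u ≤ a) (hab : a ≤ b)
    (hbv : b ≤ v) (hF : ContinuousOn F (Set.Icc u v)) (hg : Continuous g) (hg₀ : ∀ s, 0 ≤ g s)
    (hc : ∀ s ∈ Set.Icc a b, c < F s) :
    ∫ s in a..b, g s ≤ ∫ s in u..v, if c < F s then g s else 0 := by
  have hgF : ∫ s in a..b, g s = ∫ s in a..b, if c < F s then g s else 0 := by
    refine intervalIntegral.integral_congr fun s hs => (if_pos (hc s ?_)).symm
    rwa [Set.uIcc_of_le hab] at hs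
  rw [hgF]
  refine intervalIntegral.integral_mono_interval hua hab hbv
    (.of_forall fun s => by dsimp only; split_ifs <;> simp [hg₀]) ?_
  exact intervalIntegrable_ite_lt c (by rwa [Set.uIcc_of_le (by linarith)]) hg

theorem Metric.half_lt_infDist_of_dist_le_mul {X : Type*} [PseudoMetricSpace X] {S : Set X}
    {y : ℝ → X} {M δ τ s : ℝ} (hM : 0 < M) (hy : dist (y τ) (y s) ≤ M * |τ - s|)
    (hs : |τ - s| ≤ δ / (2 * M)) (hfar : δ < infDist (y τ) S) :
    δ / 2 < infDist (y s) S := by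
  have hdist : dist (y τ) (y s) ≤ δ / 2 :=
    hy.trans <| (mul_le_mul_of_nonneg_left hs hM.le).trans_eq (by field_simp)
  linarith [infDist_le_infDist_add_dist (s := S) (x := y τ) (y := y s)]

theorem stmt_13_general (n : ℕ) (f : EuclideanSpace ℝ (Fin n) → ℝ) (fbar : ℝ)
    (hf : Continuous f)
    (Mset : Set (EuclideanSpace ℝ (Fin n)))
    (γ : ℝ → ℝ)
    (hgap : ∀ δ > (0:ℝ), ∀ z, δ < Metric.infDist z Mset → fbar + γ δ < f z)
    (t lam M δ τ : ℝ) (hlam : 0 < lam) (hMpos : 0 < M) (hδ : 0 < δ)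
    (y : ℝ → EuclideanSpace ℝ (Fin n))
    (hLip : ∀ s₁ ∈ Set.Icc (0:ℝ) t, ∀ s₂ ∈ Set.Icc (0:ℝ) t,
      dist (y s₁) (y s₂) ≤ M * |s₁ - s₂|)
    (hτ₁ : δ / (2 * M) ≤ τ) (hτ₂ : τ ≤ t - δ / (2 * M))
    (hfar : δ < Metric.infDist (y τ) Mset) :
    lam * exp (-lam * τ) * δ / (M * (1 - exp (-lam * t))) ≤
      (lam / (1 - exp (-lam * t))) *
        (∫ s in (0:ℝ)..t, (if fbar + γ (δ / 2) < f (y s) then exp (-lam * s) else 0)) := by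
  set h := δ / (2 * M) with h_def
  have hh : 0 < h := by positivity
  have hy : ContinuousOn y (Set.Icc 0 t) :=
    (LipschitzOnWith.of_dist_le' fun s₁ h₁ s₂ h₂ =>
      (hLip s₁ h₁ s₂ h₂).trans_eq (by rw [Real.dist_eq])).continuousOn
  have hnear : ∀ s ∈ Set.Icc (τ - h) (τ + h), fbar + γ (δ / 2) < f (y s) := fun s ⟨hs₁, hs₂⟩ =>
    hgap (δ / 2) (by positivity) (y s) <|
      Metric.half_lt_infDist_of_dist_le_mul hMpos
        (hLip τ ⟨by linarith, by linarith⟩ s ⟨by linarith, by linarith⟩)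
        (abs_sub_le_iff.2 ⟨by linarith, by linarith⟩) hfar
  have hnorm : 0 < 1 - exp (-lam * t) := by
    rw [sub_pos, exp_lt_one_iff]
    nlinarith
  calc lam * exp (-lam * τ) * δ / (M * (1 - exp (-lam * t)))
      = (lam / (1 - exp (-lam * t))) * (2 * h * exp (-lam * τ)) := by
        rw [h_def]; field_simp
    _ ≤ (lam / (1 - exp (-lam * t))) * ∫ s in τ - h..τ + h, exp (-lam * s) := by
        gcongr
        exact two_mul_mul_exp_le_integral_exp_neg_mul τ hlam hh.le
    _ ≤ _ := by
        gcongr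
        exact integral_le_integral_ite_lt (by linarith) (by linarith) (by linarith)
          (hf.comp_continuousOn hy) (by fun_prop) (fun s => (exp_pos _).le) hnear

/-- Lower bound on the discounted occupation fraction: if an `M`-Lipschitz
trajectory is at distance `> δ` from `𝔐` at an interior time `τ`, then
`(λ/(1−e^{-λt})) ∫₀ᵗ 1_{f(y(s)) > f̲ + γ(δ/2)} e^{-λs} ds ≥ λ e^{-λτ} δ/(M(1−e^{-λt}))`. -/
theorem stmt_13 (n : ℕ) (f : EuclideanSpace ℝ (Fin n) → ℝ) (C fbar : ℝ)
    (hf : Continuous f) (hC : ∀ x, |f x| ≤ C)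
    (hmin : ∀ x, fbar ≤ f x)
    (Mset : Set (EuclideanSpace ℝ (Fin n)))
    (hMset : Mset = {x | f x = fbar}) (hMne : Mset.Nonempty)
    (γ : ℝ → ℝ)
    (hγpos : ∀ δ > (0:ℝ), 0 < γ δ)
    (hgap : ∀ δ > (0:ℝ), ∀ z, δ < Metric.infDist z Mset → fbar + γ δ < f z)
    (t lam M δ τ : ℝ) (ht : 0 < t) (hlam : 0 < lam) (hMpos : 0 < M) (hδ : 0 < δ)
    (y : ℝ → EuclideanSpace ℝ (Fin n))
    (hLip : ∀ s₁ ∈ Set.Icc (0:ℝ) t, ∀ s₂ ∈ Set.Icc (0:ℝ) t,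
      dist (y s₁) (y s₂) ≤ M * |s₁ - s₂|)
    (hτ₁ : δ / (2 * M) ≤ τ) (hτ₂ : τ ≤ t - δ / (2 * M))
    (hfar : δ < Metric.infDist (y τ) Mset) :
    lam * exp (-lam * τ) * δ / (M * (1 - exp (-lam * t))) ≤
      (lam / (1 - exp (-lam * t))) *
        (∫ s in (0:ℝ)..t, (if fbar + γ (δ / 2) < f (y s) then exp (-lam * s) else 0)) :=
  stmt_13_general n f fbar hf Mset γ hgap t lam M δ τ hlam hMpos hδ y hLip hτ₁ hτ₂ hfar
end

section
/- (Lyapunov stability, un-discounted case) Assume f continuous, bounded, attains its minimum on 𝔐, satisfies the gap condition (A3), and let y be an ε-optimal M-Lipschitz trajectory for the un-discounted finite-horizon problem starting at x. Fix δ > 0. If dist(x,𝔐) ≤ η, ε and η are small enough that ηR + ε < γ(δ/2)·δ/M (with R a Lipschitz constant of u(·,t)), then dist(y(s),𝔐) ≤ δ for all s ∈ [δ/(2M), t − δ/(2M)]. -/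
/-!
Along an ε-optimal trajectory the cost is at least `t·f̲` plus the excess `f(y(s)) - f̲`
accumulated along the way. If `y(s₀)` were farther than `δ` from `𝔐`, then by the `M`-Lipschitz
bound `y` stays farther than `δ/2` from `𝔐` on a window of length `δ/M` around `s₀`, where the
gap condition makes the excess at least `γ(δ/2)`; the cost then exceeds `t·f̲ + γ(δ/2)·δ/M`.
On the other hand the zero control from a point of `𝔐` costs `t·f̲`, so the Lipschitz bound on
`u` gives cost `≤ u(x) + ε ≤ t·f̲ + R·dist(x,𝔐) + ε ≤ t·f̲ + ηR + ε`, a contradiction.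
-/

open MeasureTheory Real Set Metric

theorem nonneg_of_abs_sub_le_mul_dist {X : Type*} [MetricSpace X] [Nontrivial X] {u : X → ℝ}
    {R : ℝ} (hu : ∀ x y, |u x - u y| ≤ R * dist x y) : 0 ≤ R := by
  obtain ⟨p, q, hpq⟩ := exists_pair_ne X
  exact nonneg_of_mul_nonneg_left ((abs_nonneg _).trans (hu p q)) (dist_pos.2 hpq)

theorem le_add_mul_infDist {X : Type*} [MetricSpace X] {u : X → ℝ} {R c : ℝ}
    (hu : ∀ x y, |u x - u y| ≤ R * dist x y) (hR : 0 ≤ R) {s : Set X} (hs : s.Nonempty)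
    (hc : ∀ z ∈ s, u z ≤ c) (x : X) : u x ≤ c + R * infDist x s := by
  have : Nonempty s := hs.to_subtype
  have hle : u x - c ≤ R * infDist x s := by
    rw [infDist_eq_iInf, Real.mul_iInf_of_nonneg hR]
    exact le_ciInf fun z => by linarith [le_of_abs_le (hu x z), hc z z.2]
  linarith

theorem le_integral_of_le_of_add_le {g : ℝ → ℝ} {a b c d m G : ℝ} (hca : c ≤ a) (hab : a ≤ b)
    (hbd : b ≤ d) (hg : IntervalIntegrable g volume c d) (hm : ∀ s ∈ Icc c d, m ≤ g s)
    (hG : ∀ s ∈ Icc a b, m + G ≤ g s) :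
    (d - c) * m + (b - a) * G ≤ ∫ s in c..d, g s := by
  have hcd : c ≤ d := hca.trans (hab.trans hbd)
  have hgm : IntervalIntegrable (fun s => g s - m) volume c d := hg.sub intervalIntegrable_const
  have hwindow : (b - a) * G ≤ ∫ s in a..b, (g s - m) := by
    have hsub : IntervalIntegrable (fun s => g s - m) volume a b :=
      hgm.mono_set (by rw [uIcc_of_le hab, uIcc_of_le hcd]; exact Icc_subset_Icc hca hbd)
    simpa using intervalIntegral.integral_mono_on hab intervalIntegrable_const hsub
      fun s hs => le_sub_iff_add_le'.2 (hG s hs)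
  have hmono : ∫ s in a..b, (g s - m) ≤ ∫ s in c..d, (g s - m) :=
    intervalIntegral.integral_mono_interval hca hab hbd
      ((ae_restrict_mem measurableSet_Ioc).mono fun s hs =>
        sub_nonneg.2 (hm s (Ioc_subset_Icc_self hs))) hgm
  rw [intervalIntegral.integral_sub hg intervalIntegrable_const, intervalIntegral.integral_const,
    smul_eq_mul] at hmono
  linarith

section Cost

variable {E : Type*} [NormedAddCommGroup E] [NormedSpace ℝ E]

noncomputable def controlCost (f : E → ℝ) (t : ℝ) (z : E) (α : ℝ → E) : ℝ :=
  ∫ s in (0:ℝ)..t, ((1/2) * ‖α s‖^2 + f (z + ∫ r in (0:ℝ)..s, α r))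

-- `min … 0` accounts for the junk value `0` of a non-integrable cost
theorem min_le_controlCost {f : E → ℝ} {fbar t : ℝ} (hmin : ∀ x, fbar ≤ f x) (ht : 0 ≤ t)
    (z : E) (α : ℝ → E) : min (t * fbar) 0 ≤ controlCost f t z α := by
  unfold controlCost
  by_cases hint : IntervalIntegrable
      (fun s => (1/2) * ‖α s‖^2 + f (z + ∫ r in (0:ℝ)..s, α r)) volume 0 t
  · refine (min_le_left _ _).trans ?_
    simpa using intervalIntegral.integral_mono_on ht intervalIntegrable_const hint
      fun s _ => le_add_of_nonneg_of_le (by positivity) (hmin _)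
  · rw [intervalIntegral.integral_undef hint]
    exact min_le_right _ _

theorem sInf_controlCost_le [MeasurableSpace E] {f : E → ℝ} {fbar t : ℝ}
    (hmin : ∀ x, fbar ≤ f x) (ht : 0 ≤ t) {z : E} (hz : f z = fbar) :
    sInf {c : ℝ | ∃ α : ℝ → E, Measurable α ∧ c = controlCost f t z α} ≤ t * fbar := by
  refine csInf_le ⟨min (t * fbar) 0, ?_⟩ ⟨fun _ => 0, measurable_const, ?_⟩
  · rintro c ⟨α, -, rfl⟩
    exact min_le_controlCost hmin ht z α
  · simp [controlCost, hz]

end Cost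

section Trajectory

variable {E : Type*} [NormedAddCommGroup E] [NormedSpace ℝ E] [CompleteSpace E]

theorem intervalIntegrable_norm_sq_of_hasDerivAt {y y' : ℝ → E} {a b M : ℝ} (hab : a ≤ b)
    (hM : 0 ≤ M) (hy' : ∀ s ∈ Icc a b, HasDerivAt y (y' s) s)
    (hyLip : ∀ s₁ ∈ Icc a b, ∀ s₂ ∈ Icc a b, dist (y s₁) (y s₂) ≤ M * |s₁ - s₂|) :
    IntervalIntegrable (fun s => ‖y' s‖ ^ 2) volume a b := by
  have hbound : ∀ s ∈ Ioo a b, ‖y' s‖ ≤ M := fun s hs =>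
    (hy' s (Ioo_subset_Icc_self hs)).le_of_lip' hM <| by
      filter_upwards [Icc_mem_nhds hs.1 hs.2] with r hr
      simpa [dist_eq_norm, Real.norm_eq_abs] using hyLip r hr s (Ioo_subset_Icc_self hs)
  rw [intervalIntegrable_iff_integrableOn_Ioo_of_le hab]
  refine Integrable.mono' (g := fun _ => M ^ 2) (integrableOn_const measure_Ioo_lt_top.ne) ?_ ?_
  · -- `y'` agrees with the measurable function `deriv y` on `[a, b]`
    refine ((stronglyMeasurable_deriv y).aestronglyMeasurable.norm.pow 2).congr ?_
    filter_upwards [ae_restrict_mem measurableSet_Ioo] with s hs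
    simp only [Pi.pow_apply, (hy' s (Ioo_subset_Icc_self hs)).deriv]
  · filter_upwards [ae_restrict_mem measurableSet_Ioo] with s hs
    rw [norm_pow, norm_norm]
    exact pow_le_pow_left₀ (norm_nonneg _) (hbound s hs) 2

theorem add_le_integral_of_lt_infDist {f : E → ℝ} {S : Set E} {y y' : ℝ → E}
    {fbar G t M δ s₀ : ℝ} (hf : Continuous f) (hmin : ∀ x, fbar ≤ f x)
    (hgap : ∀ z, δ / 2 < infDist z S → fbar + G < f z) (hM : 0 < M) (hδ : 0 < δ)
    (hy' : ∀ s ∈ Icc 0 t, HasDerivAt y (y' s) s)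
    (hyLip : ∀ s₁ ∈ Icc 0 t, ∀ s₂ ∈ Icc 0 t, dist (y s₁) (y s₂) ≤ M * |s₁ - s₂|)
    (hs₀ : s₀ ∈ Icc (δ / (2 * M)) (t - δ / (2 * M))) (hfar : δ < infDist (y s₀) S) :
    t * fbar + δ / M * G ≤ ∫ s in (0:ℝ)..t, ((1/2) * ‖y' s‖^2 + f (y s)) := by
  set r := δ / (2 * M) with hr_def
  have hr : 0 < r := by positivity
  have hMr : M * r = δ / 2 := by rw [hr_def]; field_simp
  have ht : 0 ≤ t := by linarith [hs₀.1, hs₀.2]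
  have hs₀t : s₀ ∈ Icc 0 t := ⟨by linarith [hs₀.1], by linarith [hs₀.2]⟩
  have hint : IntervalIntegrable (fun s => (1/2) * ‖y' s‖^2 + f (y s)) volume 0 t := by
    refine ((intervalIntegrable_norm_sq_of_hasDerivAt ht hM.le hy' hyLip).const_mul _).add ?_
    refine (hf.comp_continuousOn fun s hs => ?_).intervalIntegrable
    rw [uIcc_of_le ht] at hs
    exact (hy' s hs).continuousAt.continuousWithinAt
  have hnear : ∀ s ∈ Icc (s₀ - r) (s₀ + r), fbar + G ≤ (1/2) * ‖y' s‖^2 + f (y s) := by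
    intro s hs
    have hst : s ∈ Icc 0 t := ⟨by linarith [hs.1, hs₀.1], by linarith [hs.2, hs₀.2]⟩
    have hdist : dist (y s₀) (y s) ≤ δ / 2 :=
      calc dist (y s₀) (y s) ≤ M * |s₀ - s| := hyLip s₀ hs₀t s hst
        _ ≤ M * r :=
          mul_le_mul_of_nonneg_left (abs_le.2 ⟨by linarith [hs.2], by linarith [hs.1]⟩) hM.le
        _ = δ / 2 := hMr
    have hfarther : δ / 2 < infDist (y s) S := by
      linarith [infDist_le_infDist_add_dist (x := y s₀) (y := y s) (s := S)]
    linarith [hgap (y s) hfarther, show 0 ≤ (1/2) * ‖y' s‖^2 by positivity]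
  have hlen : s₀ + r - (s₀ - r) = δ / M := by rw [hr_def]; field_simp; ring
  have := le_integral_of_le_of_add_le (by linarith [hs₀.1]) (by linarith) (by linarith [hs₀.2])
    hint (fun s _ => le_add_of_nonneg_of_le (by positivity) (hmin _)) hnear
  rwa [hlen, sub_zero] at this

end Trajectory

theorem stmt_15_general (n : ℕ) (f : EuclideanSpace ℝ (Fin n) → ℝ) (fbar : ℝ)
    (hf : Continuous f)
    (hmin : ∀ x, fbar ≤ f x)
    (Mset : Set (EuclideanSpace ℝ (Fin n)))
    (hMset : Mset = {x | f x = fbar}) (hMne : Mset.Nonempty)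
    (γ : ℝ → ℝ)
    (hgap : ∀ δ > (0:ℝ), ∀ z, δ < Metric.infDist z Mset → fbar + γ δ < f z)
    (t M R ε η δ : ℝ) (ht : 0 < t) (hMpos : 0 < M)
    (hδ : 0 < δ)
    (u : EuclideanSpace ℝ (Fin n) → ℝ)
    (hu : ∀ x, u x = sInf {c : ℝ | ∃ α : ℝ → EuclideanSpace ℝ (Fin n), Measurable α ∧
      c = ∫ s in (0:ℝ)..t, ((1/2) * ‖α s‖^2 + f (x + ∫ r in (0:ℝ)..s, α r))})
    (hLip : ∀ x y, |u x - u y| ≤ R * dist x y)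
    (x : EuclideanSpace ℝ (Fin n))
    (y y' : ℝ → EuclideanSpace ℝ (Fin n))
    (hy' : ∀ s ∈ Set.Icc (0:ℝ) t, HasDerivAt y (y' s) s)
    (hyLip : ∀ s₁ ∈ Set.Icc (0:ℝ) t, ∀ s₂ ∈ Set.Icc (0:ℝ) t,
      dist (y s₁) (y s₂) ≤ M * |s₁ - s₂|)
    (hcost : (∫ s in (0:ℝ)..t, ((1/2) * ‖y' s‖^2 + f (y s))) ≤ u x + ε)
    (hclose : Metric.infDist x Mset ≤ η)
    (hsmall : η * R + ε < γ (δ / 2) * δ / M) :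
    ∀ s ∈ Set.Icc (δ / (2 * M)) (t - δ / (2 * M)),
      Metric.infDist (y s) Mset ≤ δ := by
  intro s₀ hs₀
  by_contra! hfar
  obtain ⟨z, hz⟩ := hMne
  have : Nontrivial (EuclideanSpace ℝ (Fin n)) := ⟨y s₀, z, fun h => by
    linarith [infDist_zero_of_mem (h ▸ hz : y s₀ ∈ Mset)]⟩
  have hR : 0 ≤ R := nonneg_of_abs_sub_le_mul_dist hLip
  have hux : u x ≤ t * fbar + R * infDist x Mset :=
    le_add_mul_infDist hLip hR ⟨z, hz⟩ (fun w hw => (hu w).trans_le <|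
      sInf_controlCost_le hmin ht.le (by rw [hMset] at hw; exact hw)) x
  have hlow := add_le_integral_of_lt_infDist hf hmin (hgap (δ / 2) (by positivity)) hMpos hδ
    hy' hyLip hs₀ hfar
  have hRη : R * infDist x Mset ≤ η * R := by
    rw [mul_comm η]; exact mul_le_mul_of_nonneg_left hclose hR
  have : δ / M * γ (δ / 2) = γ (δ / 2) * δ / M := by ring
  linarith

/-- Lyapunov stability, un-discounted case: if `dist(x,𝔐) ≤ η` and
`ηR + ε < γ(δ/2)·δ/M`, then an ε-optimal `M`-Lipschitz trajectory stays within
distance `δ` of `𝔐` on `[δ/(2M), t − δ/(2M)]`. -/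
theorem stmt_15 (n : ℕ) (f : EuclideanSpace ℝ (Fin n) → ℝ) (C fbar : ℝ)
    (hf : Continuous f) (hC : ∀ x, |f x| ≤ C)
    (hmin : ∀ x, fbar ≤ f x)
    (Mset : Set (EuclideanSpace ℝ (Fin n)))
    (hMset : Mset = {x | f x = fbar}) (hMne : Mset.Nonempty)
    (γ : ℝ → ℝ)
    (hγpos : ∀ δ > (0:ℝ), 0 < γ δ)
    (hgap : ∀ δ > (0:ℝ), ∀ z, δ < Metric.infDist z Mset → fbar + γ δ < f z)
    (t M R ε η δ : ℝ) (ht : 0 < t) (hMpos : 0 < M) (hε : 0 ≤ ε)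
    (hη : 0 ≤ η) (hδ : 0 < δ)
    (u : EuclideanSpace ℝ (Fin n) → ℝ)
    (hu : ∀ x, u x = sInf {c : ℝ | ∃ α : ℝ → EuclideanSpace ℝ (Fin n), Measurable α ∧
      c = ∫ s in (0:ℝ)..t, ((1/2) * ‖α s‖^2 + f (x + ∫ r in (0:ℝ)..s, α r))})
    (hLip : ∀ x y, |u x - u y| ≤ R * dist x y)
    (x : EuclideanSpace ℝ (Fin n))
    (y y' : ℝ → EuclideanSpace ℝ (Fin n))
    (hy0 : y 0 = x)
    (hy' : ∀ s ∈ Set.Icc (0:ℝ) t, HasDerivAt y (y' s) s)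
    (hyLip : ∀ s₁ ∈ Set.Icc (0:ℝ) t, ∀ s₂ ∈ Set.Icc (0:ℝ) t,
      dist (y s₁) (y s₂) ≤ M * |s₁ - s₂|)
    (hcost : (∫ s in (0:ℝ)..t, ((1/2) * ‖y' s‖^2 + f (y s))) ≤ u x + ε)
    (hclose : Metric.infDist x Mset ≤ η)
    (hsmall : η * R + ε < γ (δ / 2) * δ / M) :
    ∀ s ∈ Set.Icc (δ / (2 * M)) (t - δ / (2 * M)),
      Metric.infDist (y s) Mset ≤ δ :=
  stmt_15_general n f fbar hf hmin Mset hMset hMne γ hgap t M R ε η δ ht hMpos hδ u hu hLip x y y'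
    hy' hyLip hcost hclose hsmall
end
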